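/- arXiv:2103.14924 — 4 statements merged into one kernel-verified Lean document; each statement's English description precedes it below -/
import Mathlib

section
/- Bijection with the zero-layer of a reduced parameter vector: Let N ⊊ {0,...,d} with |N| = s, Δ = {0,...,d}\N, n ≤ r_s, and θ ∈ Σ(N,n) (i.e. θ: N → ℕ with ∑θ_i = n). Then the restriction map α ↦ (α_i)_{i∈Δ} is a bijection between Σ_{N,n,θ}(d,k) = {α ∈ Σ(d,k) : N(α)=N, n(α)=n, α_i = θ_i for i∈N} and Σ_0^{(q)}(Δ, k−n), where q = (q_1,...,q_{d−s}) with q_t = r_{t+s} − n, and Σ_0^{(q)}(Δ, k−n) = {β: Δ → ℕ : ∑β_i = k−n, and for every nonempty proper subset M ⊆ Δ with |M| = t, ∑_{i∈M} β_i > q_t}. -/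
private lemma rmono {d : ℕ} {r : ℕ → ℕ}
    (hr : ∀ s, 1 ≤ s → s + 1 ≤ d → 2 * r s ≤ r (s + 1)) :
    ∀ a b, 1 ≤ a → a ≤ b → b ≤ d → r a ≤ r b := by
  intro a b ha hab hbd
  induction b with
  | zero => omega
  | succ m ih =>
    rcases Nat.lt_or_ge a (m + 1) with h | h
    · have h1 := ih (by omega) (by omega)
      have h2 := hr m (by omega) (by omega)
      omega
    · have : a = m + 1 := by omega
      subst this; exact le_refl _


/-- `N(α) = N`: `N` is the unique subset of `{0,...,d}` of maximal cardinality with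
`∑_{i∈N} α i ≤ r (card N)` (with `N = ∅` allowed when no nonempty subset qualifies):
`N` itself satisfies the bound, and every strictly larger subset (of size `≤ d`) fails it. -/
def isNset (d : ℕ) (r : ℕ → ℕ) (α : Fin (d + 1) → ℕ) (N : Finset (Fin (d + 1))) : Prop :=
  (N = ∅ ∨ ∑ i ∈ N, α i ≤ r N.card) ∧
  ∀ M : Finset (Fin (d + 1)), N.card < M.card → M.card ≤ d → r M.card < ∑ i ∈ M, α i

/-- `Σ_0^{(q)}(Δ, m)`: functions supported on `Δ` with entries summing to `m` such that every
nonempty proper subset `M ⊆ Δ` of size `t` has entry sum `> q t`. -/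
def sigmaZero (d : ℕ) (q : ℕ → ℕ) (Δ : Finset (Fin (d + 1))) (m : ℕ) :
    Set (Fin (d + 1) → ℕ) :=
  {β | (∀ i ∉ Δ, β i = 0) ∧ ∑ i ∈ Δ, β i = m ∧
    ∀ M ⊆ Δ, M.Nonempty → M ⊂ Δ → q M.card < ∑ i ∈ M, β i}

/-- Bijection with the zero-layer of a reduced parameter vector: the restriction map
`α ↦ (α_i)_{i∈Δ}` is a bijection between `Σ_{N,n,θ}(d,k)` and `Σ_0^{(q)}(Δ, k − n)`,
where `Δ = Nᶜ` and `q t = r (t + card N) − n`. -/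
theorem restriction_bijection_zero_layer (d k : ℕ) (r : ℕ → ℕ)
    (hr : ∀ s, 1 ≤ s → s + 1 ≤ d → 2 * r s ≤ r (s + 1)) (hk : 2 * r d + 1 ≤ k)
    (N : Finset (Fin (d + 1))) (hN : N ⊂ Finset.univ)
    (n : ℕ) (hn : n ≤ r N.card)
    (θ : Fin (d + 1) → ℕ) (hθ : ∑ i ∈ N, θ i = n) :
    Set.BijOn (fun α i => if i ∈ Nᶜ then α i else 0)
      {α : Fin (d + 1) → ℕ | ∑ i, α i = k ∧ isNset d r α N ∧
        (∑ i ∈ N, α i = n) ∧ ∀ i ∈ N, α i = θ i}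
      (sigmaZero d (fun t => r (t + N.card) - n) Nᶜ (k - n)) := by
  have hcard : N.card ≤ d := by
    have := Finset.card_lt_card hN
    simpa using Nat.lt_succ_iff.mp (by simpa using this)
  have hNempty : N.card = 0 → n = 0 := by
    intro h
    rw [Finset.card_eq_zero] at h
    subst h; simpa using hθ.symm
  have hnle : ∀ b, N.card ≤ b → 1 ≤ b → b ≤ d → n ≤ r b := by
    intro b hb h1 hbd
    rcases Nat.eq_zero_or_pos N.card with h0 | hpos
    · simp [hNempty h0]
    · rcases Nat.eq_or_lt_of_le hb with h | h
      · exact h ▸ hn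
      · exact le_trans hn (rmono hr _ _ hpos hb hbd)
  have hnrd : n = 0 ∨ n ≤ r d := by
    rcases Nat.eq_zero_or_pos N.card with h0 | hpos
    · exact Or.inl (hNempty h0)
    · exact Or.inr (hnle d hcard (le_trans hpos hcard) le_rfl)
  refine ⟨?_, ?_, ?_⟩
  · -- MapsTo
    intro α hα
    obtain ⟨hsum, ⟨hN1, hN2⟩, hnα, hθα⟩ := hα
    refine ⟨fun i hi => by simp [hi], ?_, ?_⟩
    · have h1 : ∑ i ∈ N, α i + ∑ i ∈ Nᶜ, α i = k := by
        rw [Finset.sum_add_sum_compl]; exact hsum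
      have h2 : ∑ i ∈ Nᶜ, (if i ∈ Nᶜ then α i else 0) = ∑ i ∈ Nᶜ, α i :=
        Finset.sum_congr rfl fun i hi => if_pos hi
      rw [h2]; omega
    · intro M hM hMne hMss
      have hre : ∑ i ∈ M, (if i ∈ Nᶜ then α i else 0) = ∑ i ∈ M, α i :=
        Finset.sum_congr rfl fun i hi => if_pos (hM hi)
      show r (M.card + N.card) - n < ∑ i ∈ M, (if i ∈ Nᶜ then α i else 0)
      rw [hre]
      have hdisj : Disjoint M N := by
        rw [Finset.disjoint_right]
        intro i hiN hiM
        exact (Finset.mem_compl.mp (hM hiM)) hiN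
      have hcardU : (M ∪ N).card = M.card + N.card := Finset.card_union_of_disjoint hdisj
      have hUne : M ∪ N ≠ Finset.univ := by
        obtain ⟨x, hxΔ, hxM⟩ := Finset.exists_of_ssubset hMss
        intro h
        have : x ∈ M ∪ N := h ▸ Finset.mem_univ x
        rcases Finset.mem_union.mp this with h' | h'
        · exact hxM h'
        · exact (Finset.mem_compl.mp hxΔ) h'
      have hUd : (M ∪ N).card ≤ d := by
        have := Finset.card_lt_card (Finset.ssubset_univ_iff.mpr hUne)
        simpa using Nat.lt_succ_iff.mp (by simpa using this)
      have hMpos : 1 ≤ M.card := Finset.card_pos.mpr hMne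
      have hsumU : ∑ i ∈ M ∪ N, α i = ∑ i ∈ M, α i + n := by
        rw [Finset.sum_union hdisj, hnα]
      have hbig : r (M.card + N.card) < ∑ i ∈ M, α i + n := by
        have h := hN2 (M ∪ N) (by omega) (by omega)
        rw [hcardU, hsumU] at h
        exact h
      have hnT : n ≤ r (M.card + N.card) := hnle _ (by omega) (by omega) (by omega)
      omega
  · -- InjOn
    intro α hα α' hα' heq
    funext i
    by_cases hi : i ∈ N
    · rw [hα.2.2.2 i hi, hα'.2.2.2 i hi]
    · have := congrFun heq i
      simpa [Finset.mem_compl, hi] using this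
  · -- SurjOn
    intro β hβ
    obtain ⟨hβ0, hβsum, hβM⟩ := hβ
    have hnk : n ≤ k := by
      rcases hnrd with h | h <;> omega
    set α : Fin (d + 1) → ℕ := fun i => if i ∈ N then θ i else β i with hαdef
    have hαN : ∑ i ∈ N, α i = n := by
      rw [← hθ]; exact Finset.sum_congr rfl fun i hi => if_pos hi
    have hαC : ∑ i ∈ Nᶜ, α i = k - n := by
      rw [← hβsum]
      exact Finset.sum_congr rfl fun i hi => if_neg (Finset.mem_compl.mp hi)
    refine ⟨α, ⟨?_, ⟨Or.inr (by rw [hαN]; exact hn), ?_⟩, hαN, fun i hi => if_pos hi⟩, ?_⟩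
    · rw [← Finset.sum_add_sum_compl N α, hαN, hαC]; omega
    · -- the maximality condition
      intro M hMcard hMd
      have hsplit : (M ∩ N).card + (M \ N).card = M.card :=
        Finset.card_inter_add_card_sdiff M N
      have hsumsplit : ∑ i ∈ M ∩ N, α i + ∑ i ∈ M \ N, α i = ∑ i ∈ M, α i :=
        Finset.sum_inter_add_sum_sdiff M N α
      have hsdβ : ∑ i ∈ M \ N, α i = ∑ i ∈ M \ N, β i :=
        Finset.sum_congr rfl fun i hi => if_neg (Finset.mem_sdiff.mp hi).2
      have hssub : M \ N ⊆ Nᶜ := fun i hi =>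
        Finset.mem_compl.mpr (Finset.mem_sdiff.mp hi).2
      have hMpos : 1 ≤ M.card := by omega
      by_cases hne : (M \ N) = ∅
      · -- M ⊆ N : contradiction with card
        exfalso
        have : M ⊆ N := by
          intro i hi
          by_contra h
          exact (Finset.eq_empty_iff_forall_notMem.mp hne i)
            (Finset.mem_sdiff.mpr ⟨hi, h⟩)
        have := Finset.card_le_card this
        omega
      · have hMNne : (M \ N).Nonempty := Finset.nonempty_iff_ne_empty.mpr hne
        by_cases hfull : M \ N = Nᶜ
        · -- the sdiff is everything: sum is ≥ k - n
          have hβfull : ∑ i ∈ M \ N, β i = k - n := by rw [hfull]; exact hβsum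
          have hrM : r M.card ≤ r d := by
            rcases Nat.eq_or_lt_of_le hMpos with h | h
            · rcases hnrd with h' | h' <;>
                exact rmono hr _ _ hMpos hMd (le_refl d)
            · exact rmono hr _ _ hMpos hMd (le_refl d)
          rcases hnrd with h | h <;> omega
        · -- proper nonempty subset of Nᶜ: use the β condition
          have hss : M \ N ⊂ Nᶜ := Finset.ssubset_iff_subset_ne.mpr ⟨hssub, hfull⟩
          have hβcond : r ((M \ N).card + N.card) - n < ∑ i ∈ M \ N, β i :=
            hβM (M \ N) hssub hMNne hss
          set T := (M \ N).card + N.card with hT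
          have hUT : (M ∪ N).card = T := (Finset.card_sdiff_add_card M N).symm ▸ rfl
          have hUne : M ∪ N ≠ Finset.univ := by
            obtain ⟨x, hxΔ, hxM⟩ := Finset.exists_of_ssubset hss
            intro h
            have : x ∈ M ∪ N := h ▸ Finset.mem_univ x
            rcases Finset.mem_union.mp this with h' | h'
            · exact hxM (Finset.mem_sdiff.mpr ⟨h', Finset.mem_compl.mp hxΔ⟩)
            · exact (Finset.mem_compl.mp hxΔ) h'
          have hTd : T ≤ d := by
            have := Finset.card_lt_card (Finset.ssubset_univ_iff.mpr hUne)
            rw [hUT] at this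
            simpa using Nat.lt_succ_iff.mp (by simpa using this)
          have hMT : (M ∩ N).card ≤ N.card :=
            Finset.card_le_card (Finset.inter_subset_right)
          by_cases hsub : N ⊆ M
          · -- N ⊆ M : M ∩ N = N
            have hMN : M ∩ N = N := Finset.inter_eq_right.mpr hsub
            have hMcT : M.card = T := by
              rw [← hsplit, hMN]; omega
            have hθpart : ∑ i ∈ M ∩ N, α i = n := by rw [hMN]; exact hαN
            have hnT : n ≤ r T := hnle T (by omega) (by omega) hTd
            rw [hMcT, ← hsumsplit, hθpart, hsdβ]
            omega
          · -- N ⊄ M : M.card < T, use doubling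
            have hMNlt : (M ∩ N).card < N.card := by
              rcases Nat.lt_or_ge (M ∩ N).card N.card with h | h
              · exact h
              · exfalso
                have : M ∩ N = N :=
                  Finset.eq_of_subset_of_card_le Finset.inter_subset_right (by omega)
                exact hsub fun i hi => (Finset.mem_inter.mp (this ▸ hi)).1
            have hMlt : M.card < T := by omega
            have hT2 : 2 ≤ T := by omega
            have hdouble := hr (T - 1) (by omega) (by omega)
            have heq1 : T - 1 + 1 = T := by omega
            rw [heq1] at hdouble
            have hrM : r M.card ≤ r (T - 1) := rmono hr _ _ hMpos (by omega) (by omega)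
            have hnT : n ≤ r (T - 1) := hnle (T - 1) (by omega) (by omega) (by omega)
            rw [← hsumsplit, hsdβ]
            omega
    · -- mapping α back gives β
      funext i
      by_cases hi : i ∈ Nᶜ
      · have hiN : i ∉ N := Finset.mem_compl.mp hi
        simp [hi, hαdef, hiN]
      · simp only [hi, if_false]
        exact (hβ0 i hi).symm
end

section
/- Factoring out powers of a barycentric coordinate: if u is a polynomial of total degree ≤ k on ℝ^d whose normal derivatives ∂^t u / ∂n^t vanish on the hyperplane {λ = 0} for t = 0, 1, ..., t_0 with t_0 < k, where λ is a nonconstant affine function and n a unit vector not parallel to the hyperplane, then u = λ^{t_0+1} u_1 for some polynomial u_1 of total degree ≤ k − t_0 − 1. -/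
/-!
Since `λ` is affine, its derivative along `n` is a nonzero constant `c`. By induction on
`s ≤ t₀ + 1` one gets `λ ^ s ∣ u`: if `u = λ ^ s * v`, then modulo `λ` the derivative
`∂ₙ^s u` equals `s! c^s v`, so `v` vanishes on `{λ = 0}`, and substituting the projection
`x ↦ x - (λ x / c) • n` onto this hyperplane shows `λ ∣ v`. The degree bound then comes from
`deg (λ ^ (t₀ + 1) * u₁) = t₀ + 1 + deg u₁`.
-/

open MvPolynomial Nat

theorem Derivation.exists_iterate_pow_mul {R A : Type*} [CommSemiring R] [CommSemiring A]
    [Algebra R A] (D : Derivation R A A) (a : A) (t : ℕ) (v : A) :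
    ∃ w, D^[t] (a ^ t * v) = (t ! : A) * D a ^ t * v + a * w := by
  induction t generalizing v with
  | zero => exact ⟨0, by simp⟩
  | succ t ih =>
    obtain ⟨w, hw⟩ := ih ((t + 1 : A) * D a * v + a * D v)
    refine ⟨t ! * D a ^ t * D v + w, ?_⟩
    have hD : D (a ^ (t + 1) * v) = a ^ t * ((t + 1 : A) * D a * v + a * D v) := by
      rw [Derivation.leibniz, Derivation.leibniz_pow]
      simp only [smul_eq_mul, nsmul_eq_mul, Nat.add_sub_cancel]; push_cast; ring
    rw [Function.iterate_succ_apply, hD, hw, factorial_succ]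
    push_cast; ring

theorem Finsupp.eq_zero_or_exists_eq_single_of_degree_le_one {σ : Type*} {m : σ →₀ ℕ}
    (hm : m.degree ≤ 1) : m = 0 ∨ ∃ i, m = Finsupp.single i 1 := by
  classical
  have hcard : Multiset.card (toMultiset m) ≤ 1 := by rw [card_toMultiset]; exact hm
  rw [← toMultiset_toFinsupp m]
  rcases Nat.le_one_iff_eq_zero_or_eq_one.mp hcard with h | h
  · left; rw [Multiset.card_eq_zero.mp h, Multiset.toFinsupp_zero]
  · obtain ⟨i, hi⟩ := Multiset.card_eq_one.mp h
    exact .inr ⟨i, by rw [hi, Multiset.toFinsupp_singleton]⟩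

namespace MvPolynomial
variable {σ R : Type*}

theorem totalDegree_pow_of_isDomain [CommRing R] [IsDomain R] (p : MvPolynomial σ R) (n : ℕ) :
    (p ^ n).totalDegree = n * p.totalDegree := by
  rcases eq_or_ne p 0 with rfl | hp
  · cases n <;> simp
  induction n with
  | zero => simp
  | succ n ih => rw [pow_succ, totalDegree_mul_of_isDomain (pow_ne_zero n hp) hp, ih]; ring

theorem eq_C_add_sum_C_mul_X_of_totalDegree_le_one [CommSemiring R] [Fintype σ]
    {p : MvPolynomial σ R} (hp : p.totalDegree ≤ 1) :
    p = C (coeff 0 p) + ∑ i, C (coeff (Finsupp.single i 1) p) * X i := by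
  classical
  ext m
  simp only [C_mul_X_eq_monomial, coeff_add, coeff_C, coeff_sum, coeff_monomial]
  by_cases hm : m.degree ≤ 1
  · rcases Finsupp.eq_zero_or_exists_eq_single_of_degree_le_one hm with rfl | ⟨i, rfl⟩
    · simp
    · simp [Finsupp.single_left_inj, Ne.symm (Finsupp.single_ne_zero.2 one_ne_zero)]
  · have hm0 : m ≠ 0 := by rintro rfl; simp at hm
    have hsingle : ∀ i, Finsupp.single i 1 ≠ m := by rintro i rfl; simp at hm
    rw [coeff_eq_zero_of_totalDegree_lt (by rw [Finsupp.degree_apply] at hm; omega)]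
    simp [hm0.symm, hsingle]

theorem dvd_sub_bind₁ [CommRing R] {a : MvPolynomial σ R} {f : σ → MvPolynomial σ R}
    (hf : ∀ i, a ∣ X i - f i) (p : MvPolynomial σ R) : a ∣ p - bind₁ f p := by
  have hquot : (Ideal.Quotient.mkₐ R (Ideal.span {a})).comp (bind₁ f) =
      Ideal.Quotient.mkₐ R (Ideal.span {a}) :=
    algHom_ext fun i => by
      simpa [Ideal.Quotient.eq, Ideal.mem_span_singleton, dvd_sub_comm] using hf i
  rw [← Ideal.mem_span_singleton, ← Ideal.Quotient.eq]
  exact (DFunLike.congr_fun hquot p).symm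

section Directional
variable [Fintype σ]

noncomputable def directionalDeriv [CommSemiring R] (v : σ → R) :
    Derivation R (MvPolynomial σ R) (MvPolynomial σ R) :=
  ∑ i, v i • pderiv i

theorem directionalDeriv_apply [CommSemiring R] (v : σ → R) (p : MvPolynomial σ R) :
    directionalDeriv v p = ∑ i, v i • pderiv i p := by
  rw [directionalDeriv, ← Derivation.coeFnAddMonoidHom_apply, map_sum, Finset.sum_apply]
  rfl

theorem directionalDeriv_eq_C_of_totalDegree_le_one [CommSemiring R] {p : MvPolynomial σ R}
    (hp : p.totalDegree ≤ 1) (v : σ → R) :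
    directionalDeriv v p = C (∑ i, v i * coeff (Finsupp.single i 1) p) := by
  classical
  conv_lhs => rw [eq_C_add_sum_C_mul_X_of_totalDegree_le_one hp]
  simp [directionalDeriv_apply, Pi.single_apply, smul_eq_C_mul, mul_comm]

theorem eval_add_smul_of_totalDegree_le_one [CommSemiring R] {p : MvPolynomial σ R}
    (hp : p.totalDegree ≤ 1) (y v : σ → R) (s : R) :
    eval (y + s • v) p = eval y p + s * eval y (directionalDeriv v p) := by
  rw [directionalDeriv_eq_C_of_totalDegree_le_one hp, eval_C]
  conv_lhs => rw [eq_C_add_sum_C_mul_X_of_totalDegree_le_one hp]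
  conv_rhs => arg 1; rw [eq_C_add_sum_C_mul_X_of_totalDegree_le_one hp]
  simp only [map_add, map_sum, map_mul, eval_C, eval_X, Pi.add_apply, Pi.smul_apply, smul_eq_mul,
    Finset.mul_sum, add_assoc, ← Finset.sum_add_distrib]
  exact congrArg _ (Finset.sum_congr rfl fun i _ => by ring)

variable [Field R] [Infinite R] {lam : MvPolynomial σ R} {v : σ → R}

theorem dvd_of_eval_eq_zero_of_totalDegree_le_one (hlam : lam.totalDegree ≤ 1)
    (hv : directionalDeriv v lam ≠ 0) {p : MvPolynomial σ R}
    (hp : ∀ y, eval y lam = 0 → eval y p = 0) : lam ∣ p := by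
  obtain ⟨c, hc⟩ : ∃ c, directionalDeriv v lam = C c :=
    ⟨_, directionalDeriv_eq_C_of_totalDegree_le_one hlam v⟩
  have hc0 : c ≠ 0 := by rintro rfl; exact hv (by rw [hc, C_0])
  -- `bind₁ f` precomposes with the projection `y ↦ y - (eval y lam / c) • v` onto `{lam = 0}`
  set f : σ → MvPolynomial σ R := fun i => X i - C (v i / c) * lam
  have hproj : bind₁ f p = 0 := MvPolynomial.funext fun y => by
    have hpoint : (fun i => eval y (f i)) = y + (-(eval y lam / c)) • v := by
      ext i; simp [f]; ring
    have hbind : eval y (bind₁ f p) = eval (fun i => eval y (f i)) p := eval₂Hom_bind₁ _ _ _ _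
    rw [hbind, hpoint, map_zero]
    apply hp
    rw [eval_add_smul_of_totalDegree_le_one hlam, hc, eval_C]
    field_simp; ring
  have hf : ∀ i, lam ∣ X i - f i := fun i => ⟨C (v i / c), by simp only [f]; ring⟩
  simpa [hproj] using dvd_sub_bind₁ hf p

theorem pow_succ_dvd_of_eval_iterate_eq_zero [CharZero R] (hlam : lam.totalDegree ≤ 1)
    (hv : directionalDeriv v lam ≠ 0) {u : MvPolynomial σ R} {s : ℕ} (hs : lam ^ s ∣ u)
    (hu : ∀ y, eval y lam = 0 → eval y ((directionalDeriv v)^[s] u) = 0) :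
    lam ^ (s + 1) ∣ u := by
  obtain ⟨u', rfl⟩ := hs
  obtain ⟨w, hw⟩ := (directionalDeriv v).exists_iterate_pow_mul lam s u'
  rw [pow_succ]
  refine mul_dvd_mul_left _ (dvd_of_eval_eq_zero_of_totalDegree_le_one hlam hv fun y hy => ?_)
  simp only [directionalDeriv_eq_C_of_totalDegree_le_one hlam, ne_eq, C_eq_zero] at hv hw
  simpa [hw, hy, hv, factorial_ne_zero] using hu y hy

end Directional

end MvPolynomial

theorem factor_out_powers_general (d k t₀ : ℕ) (lam u : MvPolynomial (Fin d) ℝ)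
    (hlam : lam.totalDegree = 1)
    (n : Fin d → ℝ)
    (hdual : (∑ j, n j • pderiv j lam) ≠ 0)
    (hu : u.totalDegree ≤ k)
    (hvan : ∀ t ≤ t₀, ∀ y : Fin d → ℝ, eval y lam = 0 →
      eval y ((fun p => ∑ j, n j • pderiv j p)^[t] u) = 0) :
    ∃ u₁ : MvPolynomial (Fin d) ℝ, u₁.totalDegree ≤ k - t₀ - 1 ∧
      u = lam ^ (t₀ + 1) * u₁ := by
  have hD : (fun p => ∑ j, n j • pderiv j p) = ⇑(directionalDeriv n) :=
    funext fun p => (directionalDeriv_apply n p).symm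
  rw [hD] at hvan
  rw [← directionalDeriv_apply] at hdual
  have hdvd : ∀ s ≤ t₀ + 1, lam ^ s ∣ u := by
    intro s
    induction s with
    | zero => simp
    | succ s ih =>
      intro hs
      exact pow_succ_dvd_of_eval_iterate_eq_zero hlam.le hdual (ih (by omega)) (hvan s (by omega))
  obtain ⟨u₁, rfl⟩ := hdvd (t₀ + 1) le_rfl
  refine ⟨u₁, ?_, rfl⟩
  rcases eq_or_ne u₁ 0 with rfl | hu₁
  · simp
  have hlam0 : lam ≠ 0 := by rintro rfl; simp at hlam
  rw [totalDegree_mul_of_isDomain (pow_ne_zero _ hlam0) hu₁, totalDegree_pow_of_isDomain,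
    hlam] at hu
  omega

/-- Factoring out powers of a barycentric coordinate: if `u` is a polynomial of total degree
`≤ k` on `ℝ^d` whose directional derivatives `∂^t u / ∂n^t` vanish on the hyperplane
`{λ = 0}` for `t = 0, 1, ..., t₀` with `t₀ < k`, where `λ` is a nonconstant affine function
and `n` a unit vector with `Dλ(n) ≠ 0`, then `u = λ^(t₀+1) * u₁` for a polynomial `u₁` of
total degree `≤ k − t₀ − 1`. -/
theorem factor_out_powers (d k t₀ : ℕ) (lam u : MvPolynomial (Fin d) ℝ)
    (hlam : lam.totalDegree = 1)
    (n : Fin d → ℝ) (hn : ∑ j, n j ^ 2 = 1)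
    (hdual : (∑ j, n j • pderiv j lam) ≠ 0)
    (hu : u.totalDegree ≤ k) (ht₀ : t₀ < k)
    (hvan : ∀ t ≤ t₀, ∀ y : Fin d → ℝ, eval y lam = 0 →
      eval y ((fun p => ∑ j, n j • pderiv j p)^[t] u) = 0) :
    ∃ u₁ : MvPolynomial (Fin d) ℝ, u₁.totalDegree ≤ k - t₀ - 1 ∧
      u = lam ^ (t₀ + 1) * u₁ :=
  factor_out_powers_general d k t₀ lam u hlam n hdual hu hvan
end

section
/- Dimension count for the 2D C^r element family: let d = 2, r_2 ≥ 2 r_1 ≥ 0, k ≥ 2 r_2 + 1. Then the number of degrees of freedom satisfies binomial(k+2,2) = 3·binomial(r_2+2,2) + 3·[(k − 2r_2 − 1)(r_1+1) + binomial(r_1+1,2)] + |Σ_0(2,k)|, where Σ_0(2,k) = {(α_0,α_1,α_2) ∈ ℕ^3 : α_0+α_1+α_2 = k, each α_i ≥ r_1+1, and each pairwise sum α_i+α_j ≥ r_2+1}; in particular |Σ_0(2,k)| = binomial(k+2,2) − 3·binomial(r_2+2,2) − 3·[(k−2r_2−1)(r_1+1) + binomial(r_1+1,2)]. -/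
/-!
Projecting `Σ₀(2,k)` to its first two coordinates, the admissible `α₁` for fixed `α₀ = a` form
an interval, so `|Σ₀(2,k)|` is a sum of interval lengths. Writing `r₂ = 2r₁ + s` and
`k = 2r₂ + 1 + m`, these lengths increase by one over the first `s` values of `a` (lower bound
`α₀ + α₁ ≥ r₂ + 1` active) and then decrease by one down to `s` over the last `r₁ + m`
(upper bound `α₂ ≥ r₁ + 1` active). Two Gauss sums give `|Σ₀(2,k)|` as a quadratic polynomial in
`r₁, s, m`, and the dimension count becomes a polynomial identity.
-/

/-- The interior multi-index set `Σ_0(2,k)` of the 2D family: triples summing to `k` with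
every entry `≥ r₁ + 1` and every pairwise sum `≥ r₂ + 1`. -/
def interiorSet (k r₁ r₂ : ℕ) : Set (Fin 3 → ℕ) :=
  {α | α 0 + α 1 + α 2 = k ∧ (∀ i, r₁ + 1 ≤ α i) ∧
    (∀ i j : Fin 3, i ≠ j → r₂ + 1 ≤ α i + α j)}

open Finset

lemma mem_interiorSet_iff {k r₁ r₂ : ℕ} {α : Fin 3 → ℕ} :
    α ∈ interiorSet k r₁ r₂ ↔ α 0 + α 1 + α 2 = k ∧
      r₁ + 1 ≤ α 0 ∧ r₁ + 1 ≤ α 1 ∧ r₁ + 1 ≤ α 2 ∧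
      r₂ + 1 ≤ α 0 + α 1 ∧ r₂ + 1 ≤ α 0 + α 2 ∧ r₂ + 1 ≤ α 1 + α 2 := by
  simp [interiorSet, Fin.forall_fin_succ]
  omega

def planePoint (k : ℕ) (p : (_ : ℕ) × ℕ) : Fin 3 → ℕ := ![p.1, p.2, k - p.1 - p.2]

lemma planePoint_injective (k : ℕ) : Function.Injective (planePoint k) := by
  rintro ⟨a, b⟩ ⟨c, d⟩ h
  have h0 := congrFun h 0
  have h1 := congrFun h 1
  simp_all [planePoint]

/-- The admissible values of `α 1` in `interiorSet k r₁ r₂` once `α 0 = a`. -/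
def interiorFiber (k r₁ r₂ a : ℕ) : Finset ℕ :=
  Icc (max (r₁ + 1) (r₂ + 1 - a)) (min (k - a - (r₁ + 1)) (k - (r₂ + 1)))

lemma interiorSet_eq_image (k r₁ r₂ : ℕ) :
    interiorSet k r₁ r₂ =
      planePoint k '' ↑((Icc (r₁ + 1) (k - (r₂ + 1))).sigma (interiorFiber k r₁ r₂)) := by
  ext α
  simp only [mem_interiorSet_iff, interiorFiber, Set.mem_image, coe_sigma, Set.mem_sigma_iff,
    mem_coe, mem_Icc, max_le_iff, le_min_iff, Sigma.exists]
  constructor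
  · intro h
    refine ⟨α 0, α 1, by omega, funext fun i => ?_⟩
    fin_cases i <;> simp [planePoint]; omega
  · rintro ⟨a, b, hab, rfl⟩
    simp [planePoint]
    omega

lemma card_interiorSet_eq_sum (k r₁ r₂ : ℕ) :
    Nat.card (interiorSet k r₁ r₂) =
      ∑ a ∈ Icc (r₁ + 1) (k - (r₂ + 1)), #(interiorFiber k r₁ r₂ a) := by
  rw [interiorSet_eq_image, Nat.card_coe_set_eq, Set.ncard_image_of_injective _
    (planePoint_injective k), Set.ncard_coe_finset, card_sigma]

lemma sum_range_add_id (c n : ℕ) : ∑ i ∈ range n, (c + i) = n * c + n.choose 2 := by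
  rw [sum_add_distrib, sum_const, card_range, smul_eq_mul, sum_range_id, Nat.choose_two_right]

lemma card_interiorSet (r₁ s m : ℕ) :
    Nat.card (interiorSet (2 * (2 * r₁ + s) + 1 + m) r₁ (2 * r₁ + s)) =
      s * (r₁ + m + 1) + s.choose 2 + ((r₁ + m) * s + (r₁ + m).choose 2) := by
  have hsplit : Icc (r₁ + 1) (2 * (2 * r₁ + s) + 1 + m - (2 * r₁ + s + 1)) =
      Ico (r₁ + 1) (r₁ + 1 + s) ∪ Ico (r₁ + 1 + s) (r₁ + 1 + s + (r₁ + m)) := by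
    rw [Ico_union_Ico_eq_Ico (by omega) (by omega), ← Ico_add_one_right_eq_Icc]
    congr 1; omega
  rw [card_interiorSet_eq_sum, hsplit, sum_union (Ico_disjoint_Ico_consecutive _ _ _),
    sum_Ico_eq_sum_range, sum_Ico_eq_sum_range, Nat.add_sub_cancel_left,
    Nat.add_sub_cancel_left]
  have hleft : ∀ i ∈ range s, #(interiorFiber (2 * (2 * r₁ + s) + 1 + m) r₁ (2 * r₁ + s)
      (r₁ + 1 + i)) = (r₁ + m + 1) + i := by
    intro i hi
    simp only [mem_range, interiorFiber, Nat.card_Icc] at hi ⊢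
    omega
  have hright : ∀ j ∈ range (r₁ + m), #(interiorFiber (2 * (2 * r₁ + s) + 1 + m) r₁ (2 * r₁ + s)
      (r₁ + 1 + s + j)) = s + (r₁ + m - 1 - j) := by
    intro j hj
    simp only [mem_range, interiorFiber, Nat.card_Icc] at hj ⊢
    omega
  rw [sum_congr rfl hleft, sum_congr rfl hright, sum_range_reflect (fun j => s + j),
    sum_range_add_id, sum_range_add_id]

/-- Dimension count for the 2D `C^r` element family: with `r₂ ≥ 2r₁` and `k ≥ 2r₂ + 1`,
`binomial(k+2,2) = 3·binomial(r₂+2,2) + 3·[(k − 2r₂ − 1)(r₁+1) + binomial(r₁+1,2)] + |Σ_0(2,k)|`;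
in particular `|Σ_0(2,k)|` equals the difference. -/
theorem dimension_count_2d (k r₁ r₂ : ℕ) (h₁ : 2 * r₁ ≤ r₂) (h₂ : 2 * r₂ + 1 ≤ k) :
    (k + 2).choose 2 =
      3 * (r₂ + 2).choose 2
        + 3 * ((k - 2 * r₂ - 1) * (r₁ + 1) + (r₁ + 1).choose 2)
        + Nat.card (interiorSet k r₁ r₂) ∧
    Nat.card (interiorSet k r₁ r₂) =
      (k + 2).choose 2 - 3 * (r₂ + 2).choose 2
        - 3 * ((k - 2 * r₂ - 1) * (r₁ + 1) + (r₁ + 1).choose 2) := by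
  obtain ⟨s, rfl⟩ : ∃ s, r₂ = 2 * r₁ + s := ⟨r₂ - 2 * r₁, by omega⟩
  obtain ⟨m, rfl⟩ : ∃ m, k = 2 * (2 * r₁ + s) + 1 + m := ⟨k - (2 * (2 * r₁ + s) + 1), by omega⟩
  have hcount : (2 * (2 * r₁ + s) + 1 + m + 2).choose 2 =
      3 * (2 * r₁ + s + 2).choose 2 + 3 * (m * (r₁ + 1) + (r₁ + 1).choose 2)
        + Nat.card (interiorSet (2 * (2 * r₁ + s) + 1 + m) r₁ (2 * r₁ + s)) := by
    rw [card_interiorSet]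
    apply Nat.cast_injective (R := ℚ)
    push_cast [Nat.cast_choose_two]
    ring
  rw [show 2 * (2 * r₁ + s) + 1 + m - 2 * (2 * r₁ + s) - 1 = m by omega]
  exact ⟨hcount, by omega⟩
end

section
/- Embedding of reduced dual multi-indices: let I ∈ {0,...,d}, N ⊊ {0,...,d}\{I}, n ≤ r_{|N|}, and l ≤ min{r_1, n}. Set q = (q_1,...,q_{d−1}) with q_i = r_{i+1} − l. Given β with N'^{(q)}(β) = N and n'^{(q)}(β) = n − l in the dual decomposition of Σ({0,...,d}\{I}, k−l), and θ ∈ Σ(N ∪ {I}, l), define α by α_i = β_i + θ_i for i ∈ N, α_i = β_i for i ∉ N ∪ {I}, and α_I = θ_I. Then α ∈ Σ(d,k) with N'^{(r)}(α) = N ∪ {I} and n'^{(r)}(α) = n. -/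
/-- For each `1 ≤ t ≤ s` there exists a subset `M ⊆ D` with `card M = t` and
`∑_{i∈M} α i ≤ p t`. -/
def chainOn (m : ℕ) (p : ℕ → ℕ) (D : Finset (Fin m)) (s : ℕ) (α : Fin m → ℕ) : Prop :=
  ∀ t, 1 ≤ t → t ≤ s → ∃ M ⊆ D, M.card = t ∧ ∑ i ∈ M, α i ≤ p t

/-- `N'(α) = N` in the dual decomposition of multi-indices on the index set `D` with
parameter vector `p`. -/
def isNdual (m : ℕ) (p : ℕ → ℕ) (D : Finset (Fin m)) (α : Fin m → ℕ)
    (N : Finset (Fin m)) : Prop :=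
  N ⊆ D ∧ (N = ∅ ∨ ∑ i ∈ N, α i ≤ p N.card) ∧ chainOn m p D N.card α ∧
    (N.card + 1 = D.card ∨ ¬ chainOn m p D (N.card + 1) α)

/-- Embedding of reduced dual multi-indices: given `I ∈ {0,...,d}`, `N ⊊ {0,...,d}\{I}`,
`n ≤ r (card N)`, `l ≤ min (r 1) n`, a multi-index `β` on `{0,...,d}\{I}` of total sum
`k − l` with `N'^{(q)}(β) = N`, `n'^{(q)}(β) = n − l` (where `q_i = r_{i+1} − l`), and
`θ ∈ Σ(N ∪ {I}, l)`, the multi-index `α` defined by `α_i = β_i + θ_i` on `N`, `α_i = β_i`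
outside `N ∪ {I}`, and `α_I = θ_I` satisfies `α ∈ Σ(d,k)`, `N'^{(r)}(α) = N ∪ {I}` and
`n'^{(r)}(α) = n`. -/
theorem embedding_reduced_dual (d k : ℕ) (r : ℕ → ℕ)
    (hr : ∀ t, 1 ≤ t → t + 1 ≤ d → 2 * r t ≤ r (t + 1)) (hk : 2 * r d + 1 ≤ k)
    (I : Fin (d + 1)) (N : Finset (Fin (d + 1))) (hN : N ⊂ Finset.univ.erase I)
    (n l : ℕ) (hn : n ≤ r N.card) (hl1 : l ≤ r 1) (hln : l ≤ n)
    (β : Fin (d + 1) → ℕ) (hβI : β I = 0)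
    (hβsum : ∑ i ∈ Finset.univ.erase I, β i = k - l)
    (hβN : isNdual (d + 1) (fun t => r (t + 1) - l) (Finset.univ.erase I) β N)
    (hβn : ∑ i ∈ N, β i = n - l)
    (θ : Fin (d + 1) → ℕ) (hθ0 : ∀ i ∉ insert I N, θ i = 0)
    (hθl : ∑ i ∈ insert I N, θ i = l)
    (α : Fin (d + 1) → ℕ)
    (hα : α = fun i => if i = I then θ i else if i ∈ N then β i + θ i else β i) :
    (∑ i, α i = k) ∧ isNdual (d + 1) r Finset.univ α (insert I N) ∧
      ∑ i ∈ insert I N, α i = n := by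
  classical
  have hcard_erase : (Finset.univ.erase I).card = d := by
    rw [Finset.card_erase_of_mem (Finset.mem_univ I), Finset.card_univ, Fintype.card_fin]
    omega
  have hsub : N ⊆ Finset.univ.erase I := hN.subset
  have hIN : I ∉ N := fun h => (Finset.mem_erase.mp (hsub h)).1 rfl
  have hs : N.card < d := by
    have := Finset.card_lt_card hN
    omega
  have hd1 : 1 ≤ d := by omega
  have rmono : ∀ a b, 1 ≤ a → a ≤ b → b ≤ d → r a ≤ r b := by
    intro a b ha hab hbd
    induction b with
    | zero => omega
    | succ b ih =>
      rcases Nat.lt_or_ge a (b + 1) with h | h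
      · have h1 := ih (by omega) (by omega)
        have h2 := hr b (by omega) hbd
        omega
      · have : a = b + 1 := by omega
        rw [this]
  have hl_le : ∀ t, 1 ≤ t → t ≤ d → l ≤ r t := fun t h1 h2 => hl1.trans (rmono 1 t le_rfl h1 h2)
  have hlk : l ≤ k := by
    have := rmono 1 d le_rfl hd1 le_rfl
    omega
  have hθuniv : ∑ i, θ i = l := by
    rw [← hθl]
    exact (Finset.sum_subset (Finset.subset_univ _) (fun i _ hi => hθ0 i hi)).symm
  have hθsub : ∀ S : Finset (Fin (d + 1)), ∑ i ∈ S, θ i ≤ l := by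
    intro S
    rw [← hθuniv]
    exact Finset.sum_le_sum_of_subset (Finset.subset_univ S)
  have hαI : α I = θ I := by simp [hα]
  have hαnI : ∀ i, i ≠ I → α i = β i + θ i := by
    intro i hi
    by_cases h : i ∈ N
    · simp [hα, hi, h]
    · have h0 : θ i = 0 := hθ0 i (by simp [Finset.mem_insert, hi, h])
      simp [hα, hi, h, h0]
  have hS : ∀ S : Finset (Fin (d + 1)), I ∉ S →
      ∑ i ∈ S, α i = ∑ i ∈ S, β i + ∑ i ∈ S, θ i := by
    intro S hIS
    rw [← Finset.sum_add_distrib]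
    exact Finset.sum_congr rfl fun i hi => hαnI i (fun h => hIS (h ▸ hi))
  have hIE : I ∉ Finset.univ.erase I := fun h => (Finset.mem_erase.mp h).1 rfl
  -- goal 1
  have goal1 : ∑ i, α i = k := by
    have e1 : ∑ i ∈ Finset.univ.erase I, α i + α I = ∑ i, α i :=
      Finset.sum_erase_add _ _ (Finset.mem_univ I)
    have e2 := hS _ hIE
    have e3 : ∑ i ∈ Finset.univ.erase I, θ i + θ I = ∑ i, θ i :=
      Finset.sum_erase_add _ _ (Finset.mem_univ I)
    omega
  -- sum over insert I N
  have hNθ : θ I + ∑ i ∈ N, θ i = l := by rw [← Finset.sum_insert hIN]; exact hθl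
  have hNα : ∑ i ∈ N, α i = (n - l) + ∑ i ∈ N, θ i := by rw [hS N hIN, hβn]
  have hsumN' : ∑ i ∈ insert I N, α i = n := by
    rw [Finset.sum_insert hIN, hαI]
    omega
  have hcardN' : (insert I N).card = N.card + 1 := Finset.card_insert_of_notMem hIN
  have hn1 : n ≤ r (N.card + 1) := by
    rcases Nat.eq_zero_or_pos N.card with h0 | hpos
    · have hNe : N = ∅ := Finset.card_eq_zero.mp h0
      have h1 : n - l = 0 := by rw [← hβn, hNe]; simp
      have h2 : n = l := by omega
      rw [h0]
      norm_num
      omega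
    · have := rmono N.card (N.card + 1) hpos (by omega) (by omega)
      omega
  -- chain for α up to N.card + 1
  have hchainα : chainOn (d + 1) r Finset.univ (N.card + 1) α := by
    intro t ht1 hts
    rcases Nat.lt_or_ge t (N.card + 1) with hlt | hge
    · rcases Nat.lt_or_ge 1 t with h1 | h1
      · -- 2 ≤ t : use β chain at t - 1
        obtain ⟨M₀, hM₀D, hM₀card, hM₀sum⟩ := hβN.2.2.1 (t - 1) (by omega) (by omega)
        have hIM₀ : I ∉ M₀ := fun h => hIE (hM₀D h)
        refine ⟨insert I M₀, Finset.subset_univ _, ?_, ?_⟩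
        · rw [Finset.card_insert_of_notMem hIM₀]; omega
        · have hθM : θ I + ∑ i ∈ M₀, θ i ≤ l := by
            rw [← Finset.sum_insert hIM₀]; exact hθsub _
          have hlt' : l ≤ r t := hl_le t (by omega) (by omega)
          have hβb : ∑ i ∈ M₀, β i ≤ r (t - 1 + 1) - l := hM₀sum
          have het : t - 1 + 1 = t := by omega
          rw [het] at hβb
          rw [Finset.sum_insert hIM₀, hαI, hS M₀ hIM₀]
          omega
      · -- t = 1 : M = {I}
        have ht : t = 1 := by omega
        refine ⟨{I}, Finset.subset_univ _, by simp [ht], ?_⟩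
        have : l ≤ r t := hl_le t (by omega) (by omega)
        rw [Finset.sum_singleton, hαI]
        omega
    · -- t = N.card + 1 : take insert I N
      have ht : t = N.card + 1 := by omega
      exact ⟨insert I N, Finset.subset_univ _, by omega, by rw [hsumN', ht]; exact hn1⟩
  -- maximality
  have hlast : N.card + 1 + 1 = (d : ℕ) + 1 ∨
      ¬ chainOn (d + 1) r Finset.univ (N.card + 1 + 1) α := by
    by_cases hcase : N.card + 2 = d + 1
    · exact Or.inl (by omega)
    · right
      have hs2 : N.card + 2 ≤ d := by omega
      have hβmax : ¬ chainOn (d + 1) (fun t => r (t + 1) - l) (Finset.univ.erase I)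
          (N.card + 1) β := by
        rcases hβN.2.2.2 with h | h
        · rw [hcard_erase] at h; omega
        · exact h
      intro hchain
      apply hβmax
      intro t ht1 hts
      rcases Nat.lt_or_ge t (N.card + 1) with hlt | hge
      · exact hβN.2.2.1 t ht1 (by omega)
      · have ht : t = N.card + 1 := by omega
        subst ht
        obtain ⟨M, hMuniv, hMcard, hMsum⟩ := hchain (N.card + 2) (by omega) le_rfl
        -- hMsum : ∑ i ∈ M, α i ≤ r (N.card + 2)
        set X := insert I N with hX
        have hCcard : 1 ≤ (M \ X).card := by
          have := Finset.card_le_card_sdiff_add_card (s := M) (t := X)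
          omega
        have hCne : (M \ X).Nonempty := Finset.card_pos.mp (by omega)
        obtain ⟨j, hjC, hjmin⟩ := Finset.exists_min_image (M \ X) β hCne
        have hjX : j ∉ X := (Finset.mem_sdiff.mp hjC).2
        have hjI : j ≠ I := fun h => hjX (h ▸ Finset.mem_insert_self I N)
        have hjN : j ∉ N := fun h => hjX (Finset.mem_insert_of_mem h)
        have hsplit : ∑ i ∈ M ∩ X, α i + ∑ i ∈ M \ X, α i = ∑ i ∈ M, α i :=
          Finset.sum_inter_add_sum_sdiff M X α
        have hβα : ∀ i ∈ M \ X, β i ≤ α i := by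
          intro i hi
          have hiI : i ≠ I := fun h =>
            (Finset.mem_sdiff.mp hi).2 (h ▸ Finset.mem_insert_self I N)
          rw [hαnI i hiI]
          omega
        have hβj : β j ≤ α j := hβα j hjC
        have hkey : n + β j ≤ r (N.card + 2) := by
          rcases Nat.lt_or_ge (M \ X).card 2 with hc1 | hc2
          · -- (M \ X).card = 1, so X ⊆ M
            have hcX : (M ∩ X).card = N.card + 1 := by
              have := Finset.card_inter_add_card_sdiff M X
              omega
            have hXM : M ∩ X = X := Finset.eq_of_subset_of_card_le
              (Finset.inter_subset_right) (by rw [hcX, hX, hcardN'])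
            have h1 : ∑ i ∈ M ∩ X, α i = n := by rw [hXM]; exact hsumN'
            have h2 : α j ≤ ∑ i ∈ M \ X, α i :=
              Finset.single_le_sum (fun i _ => Nat.zero_le _) hjC
            omega
          · -- (M \ X).card ≥ 2
            have h2b : (M \ X).card • β j ≤ ∑ i ∈ M \ X, β i :=
              Finset.card_nsmul_le_sum _ _ _ hjmin
            have h2b2 : (M \ X).card * β j ≤ ∑ i ∈ M \ X, β i := by
              simpa [smul_eq_mul] using h2b
            have h2b' : 2 * β j ≤ ∑ i ∈ M \ X, β i :=
              le_trans (Nat.mul_le_mul hc2 le_rfl) h2b2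
            have h3 : ∑ i ∈ M \ X, β i ≤ ∑ i ∈ M \ X, α i := Finset.sum_le_sum hβα
            have h4 : 2 * n ≤ r (N.card + 2) := by
              have h : 2 * r (N.card + 1) ≤ r (N.card + 2) :=
                hr (N.card + 1) (by omega) (by omega)
              omega
            omega
        refine ⟨insert j N, ?_, ?_, ?_⟩
        · intro i hi
          rcases Finset.mem_insert.mp hi with h | h
          · exact Finset.mem_erase.mpr ⟨by rw [h]; exact hjI, Finset.mem_univ i⟩
          · exact hsub h
        · rw [Finset.card_insert_of_notMem hjN]
        · show ∑ i ∈ insert j N, β i ≤ r (N.card + 2) - l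
          rw [Finset.sum_insert hjN, hβn]
          omega
  refine ⟨goal1, ⟨Finset.subset_univ _, Or.inr ?_, ?_, ?_⟩, hsumN'⟩
  · rw [hsumN', hcardN']; exact hn1
  · rw [hcardN']; exact hchainα
  · rw [hcardN', Finset.card_univ, Fintype.card_fin]; exact hlast
end
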